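/- Let $g:[a,b]\to\mathbb{R}$ be left-continuous of bounded variation and $h\in L^1(|\mu_g|)$ with $1+h(t)\Delta^+g(t) > 0$ for all $t\in D_g$. Then the $g$-exponential $e_h(t;a) = \prod_{s\in[a,t)\cap D_g}(1+h(s)\Delta^+g(s))\cdot \exp\big(\int_{[a,t)\setminus D_g} h\, d\mu_g\big)$ satisfies $e_h(t;a) = \exp\big(\int_{[a,t)} \overline{h}\, d\mu_g\big)$ for all $t\in[a,b]$, where $\overline{h}(t) = h(t)$ for $t\notin D_g$ and $\overline{h}(t) = \log(1+h(t)\Delta^+g(t))/\Delta^+g(t)$ for $t\in D_g$. In particular $e_h(\cdot;a) > 0$ everywhere. -/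

import Mathlib

/-!
An atom `s ∈ D_g` carries mass `μ_g {s} = Δ⁺g(s)`, by continuity from above of `μ_g` along
`[s, x)` as `x ↓ s`; hence `D_g` is countable and `Δ⁺g(s) · h̄(s) = log (1 + h(s) Δ⁺g(s))`.
The integral of `h̄` over the atoms of `[a, t)` is therefore the sum of these logarithms, which
converges since `∑ |h(s) Δ⁺g(s)| ≤ ∫ |h| d|μ_g|`, and off the atoms `h̄ = h`. Exponentiating turns
the sum of logarithms into the product.
-/

open Set Filter MeasureTheory
open scoped Classical

/-- Integral of `f` with respect to a signed measure, via the Jordan decomposition. -/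
noncomputable def sInt (μ : MeasureTheory.SignedMeasure ℝ) (f : ℝ → ℝ) (s : Set ℝ) : ℝ :=
  (∫ x in s, f x ∂μ.toJordanDecomposition.posPart) -
    ∫ x in s, f x ∂μ.toJordanDecomposition.negPart

/-- The right jump of `g` at `t`. -/
noncomputable def jump (g : ℝ → ℝ) (t : ℝ) : ℝ := Function.rightLim g t - g t

/-- The jump set `D_g` of `g` on `[a,b)`. -/
def jumpSet (g : ℝ → ℝ) (a b : ℝ) : Set ℝ := {t | t ∈ Set.Ico a b ∧ jump g t ≠ 0}

/-- The modified integrand `h̄`. -/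
noncomputable def hbar (g h : ℝ → ℝ) (t : ℝ) : ℝ :=
  if jump g t ≠ 0 then Real.log (1 + h t * jump g t) / jump g t else h t

open scoped Topology

namespace MeasureTheory

theorem integrableOn_countable_iff {α E : Type*} [MeasurableSpace α] [MeasurableSingletonClass α]
    [NormedAddCommGroup E] {ν : Measure α} [IsFiniteMeasure ν] {f : α → E} {s : Set α}
    (hs : s.Countable) :
    IntegrableOn f s ν ↔ Summable fun x : s ↦ ν.real {x.1} * ‖f x‖ := by
  have := hs.to_subtype
  have hcomap (x : s) : ν.comap Subtype.val {x} = ν {x.1} := by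
    rw [Measure.comap_apply _ Subtype.val_injective
      (fun _ ht ↦ hs.measurableSet.subtype_image ht) _ (measurableSet_singleton x), image_singleton]
  rw [integrableOn_iff_comap_subtypeVal hs.measurableSet, ← Measure.sum_smul_dirac (ν.comap _),
    integrable_sum_dirac_iff fun x ↦ (hcomap x).symm ▸ measure_ne_top _ _]
  simp only [hcomap, measureReal_def, Function.comp_apply]

namespace SignedMeasure

variable {α : Type*} [MeasurableSpace α] (μ : SignedMeasure α)

theorem integrableOn_totalVariation_iff {f : α → ℝ} {s : Set α} :
    IntegrableOn f s μ.totalVariation ↔ IntegrableOn f s μ.toJordanDecomposition.posPart ∧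
      IntegrableOn f s μ.toJordanDecomposition.negPart :=
  integrableOn_add_measure

variable [MeasurableSingletonClass α]

theorem totalVariation_real_singleton (x : α) : μ.totalVariation.real {x} = |μ {x}| := by
  obtain ⟨A, -, hA, hAc⟩ := μ.toJordanDecomposition.mutuallySingular
  rw [μ.apply_eq_posPart_real_sub_negPart_real (measurableSet_singleton x), totalVariation,
    measureReal_add_apply]
  by_cases hx : x ∈ A
  · have : μ.toJordanDecomposition.posPart.real {x} = 0 := by
      simp [measureReal_def, measure_mono_null (singleton_subset_iff.2 hx) hA]
    rw [this, zero_sub, zero_add, abs_neg, abs_of_nonneg measureReal_nonneg]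
  · have : μ.toJordanDecomposition.negPart.real {x} = 0 := by
      simp [measureReal_def, measure_mono_null (singleton_subset_iff.2 hx) hAc]
    rw [this, sub_zero, add_zero, abs_of_nonneg measureReal_nonneg]

theorem countable_setOf_apply_singleton_ne_zero : {x | μ {x} ≠ 0}.Countable := by
  refine (Measure.countable_meas_pos_of_disjoint_iUnion (μ := μ.totalVariation)
    measurableSet_singleton fun x y hxy ↦ disjoint_singleton.2 hxy).mono fun x hx ↦ ?_
  exact pos_iff_ne_zero.2 fun h0 ↦ hx (μ.null_of_totalVariation_zero h0)

end SignedMeasure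

theorem SignedMeasure.tendsto_apply_Ico_nhdsGT (μ : SignedMeasure ℝ) (s : ℝ) :
    Tendsto (fun x ↦ μ (Ico s x)) (𝓝[>] s) (𝓝 (μ {s})) := by
  have hInter : ⋂ r > s, Ico s r = {s} := by
    ext x
    simp only [mem_iInter, mem_Ico, mem_singleton_iff]
    refine ⟨fun hx ↦ ?_, fun hx r hr ↦ by subst hx; exact ⟨le_rfl, hr⟩⟩
    obtain ⟨hsx, -⟩ := hx (s + 1) (lt_add_one s)
    exact le_antisymm (le_of_forall_gt fun r hr ↦ (hx r hr).2) hsx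
  have hreal (ν : Measure ℝ) [IsFiniteMeasure ν] :
      Tendsto (fun x ↦ ν.real (Ico s x)) (𝓝[>] s) (𝓝 (ν.real {s})) := by
    have := tendsto_measure_biInter_gt (μ := ν) (s := Ico s) (a := s)
      (fun _ _ ↦ measurableSet_Ico.nullMeasurableSet) (fun _ _ _ hij ↦ Ico_subset_Ico_right hij)
      ⟨s + 1, lt_add_one s, measure_ne_top _ _⟩
    rw [hInter] at this
    exact (ENNReal.tendsto_toReal (measure_ne_top _ _)).comp this
  simp only [μ.apply_eq_posPart_real_sub_negPart_real measurableSet_Ico,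
    μ.apply_eq_posPart_real_sub_negPart_real (measurableSet_singleton s)]
  exact (hreal _).sub (hreal _)

end MeasureTheory

section sInt

variable {μ : SignedMeasure ℝ} {f f' : ℝ → ℝ} {s t : Set ℝ}

theorem sInt_congr (hs : MeasurableSet s) (hf : EqOn f f' s) : sInt μ f s = sInt μ f' s := by
  rw [sInt, sInt, setIntegral_congr_fun hs hf, setIntegral_congr_fun hs hf]

theorem sInt_union (hst : Disjoint s t) (ht : MeasurableSet t)
    (hfs : IntegrableOn f s μ.totalVariation) (hft : IntegrableOn f t μ.totalVariation) :
    sInt μ f (s ∪ t) = sInt μ f s + sInt μ f t := by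
  rw [μ.integrableOn_totalVariation_iff] at hfs hft
  rw [sInt, sInt, sInt, setIntegral_union hst ht hfs.1 hft.1, setIntegral_union hst ht hfs.2 hft.2]
  ring

theorem sInt_of_countable (hs : s.Countable) (hf : IntegrableOn f s μ.totalVariation) :
    sInt μ f s = ∑' x : s, μ {x.1} * f x := by
  obtain ⟨hP, hN⟩ := μ.integrableOn_totalVariation_iff.1 hf
  have hsummable {ν : Measure ℝ} [IsFiniteMeasure ν] (hν : IntegrableOn f s ν) :
      Summable fun x : s ↦ ν.real {x.1} • f x :=
    ((integrableOn_countable_iff hs).1 hν).of_norm_bounded fun x ↦ by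
      rw [norm_smul, Real.norm_of_nonneg measureReal_nonneg]
  rw [sInt, setIntegral_countable _ hs hP, setIntegral_countable _ hs hN,
    ← (hsummable hP).tsum_sub (hsummable hN)]
  refine tsum_congr fun x ↦ ?_
  rw [μ.apply_eq_posPart_real_sub_negPart_real (measurableSet_singleton _), smul_eq_mul,
    smul_eq_mul, sub_mul]

end sInt

theorem jump_eq_apply_singleton {a b s : ℝ} {g : ℝ → ℝ} {μ : SignedMeasure ℝ}
    (hμ : ∀ t ∈ Icc a b, μ (Ico a t) = g t - g a) (hs : s ∈ Ico a b) : jump g s = μ {s} := by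
  have hincr : ∀ x ∈ Ioc s b, g x - g s = μ (Ico s x) := fun x hx ↦ by
    have := VectorMeasure.of_union (v := μ) (Ico_disjoint_Ico_same (a := a) (b := s) (c := x))
      measurableSet_Ico measurableSet_Ico
    rw [Ico_union_Ico_eq_Ico hs.1 hx.1.le, hμ x ⟨hs.1.trans hx.1.le, hx.2⟩,
      hμ s ⟨hs.1, hs.2.le⟩] at this
    linarith
  have hg : Tendsto g (𝓝[>] s) (𝓝 (g s + μ {s})) := by
    have := (μ.tendsto_apply_Ico_nhdsGT s).const_add (g s)
    refine this.congr' (eventually_of_mem (Ioc_mem_nhdsGT hs.2) fun x hx ↦ ?_)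
    rw [← hincr x hx, add_sub_cancel]
  rw [jump, rightLim_eq_of_tendsto hg, add_sub_cancel_left]

theorem countable_jumpSet {a b : ℝ} {g : ℝ → ℝ} {μ : SignedMeasure ℝ}
    (hμ : ∀ t ∈ Icc a b, μ (Ico a t) = g t - g a) : (jumpSet g a b).Countable :=
  μ.countable_setOf_apply_singleton_ne_zero.mono fun s hs ↦
    (jump_eq_apply_singleton hμ hs.1 ▸ hs.2 : μ {s} ≠ 0)

theorem hbar_of_jump_eq_zero {g h : ℝ → ℝ} {t : ℝ} (ht : jump g t = 0) : hbar g h t = h t := by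
  simp [hbar, ht]

theorem hbar_eqOn_sdiff_jumpSet (g h : ℝ → ℝ) (a b : ℝ) :
    EqOn (hbar g h) h (Ico a b \ jumpSet g a b) := fun _ hx ↦
  hbar_of_jump_eq_zero (not_not.1 fun hx' ↦ hx.2 ⟨hx.1, hx'⟩)

theorem jump_mul_hbar (g h : ℝ → ℝ) (t : ℝ) :
    jump g t * hbar g h t = Real.log (1 + h t * jump g t) := by
  by_cases ht : jump g t = 0
  · simp [ht]
  · rw [hbar, if_pos ht, mul_div_cancel₀ _ ht]

section CountableJumps

variable {μ : SignedMeasure ℝ} {g h : ℝ → ℝ} {S : Set ℝ}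

theorem summable_mul_jump (hS : S.Countable) (hjump : ∀ s ∈ S, jump g s = μ {s})
    (hh : IntegrableOn h S μ.totalVariation) : Summable fun s : S ↦ h s * jump g s :=
  ((integrableOn_countable_iff hS).1 hh).of_norm_bounded fun s ↦ by
    rw [norm_mul, hjump s s.2, mul_comm]
    exact mul_le_mul_of_nonneg_right (μ.norm_le_totalVariation _) (norm_nonneg _)

theorem integrableOn_hbar (hS : S.Countable) (hjump : ∀ s ∈ S, jump g s = μ {s})
    (hh : IntegrableOn h S μ.totalVariation) : IntegrableOn (hbar g h) S μ.totalVariation := by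
  rw [integrableOn_countable_iff hS]
  refine (Real.summable_log_one_add_of_summable (summable_mul_jump hS hjump hh)).abs.congr
    fun s ↦ ?_
  rw [← jump_mul_hbar, abs_mul, hjump s s.2, μ.totalVariation_real_singleton, Real.norm_eq_abs]

end CountableJumps

theorem gExp_eq_exp_hbar_general (a b : ℝ) (g : ℝ → ℝ)
    (μ : MeasureTheory.SignedMeasure ℝ)
    (hμ : ∀ t ∈ Icc a b, μ (Ico a t) = g t - g a)
    (h : ℝ → ℝ)
    (hh : IntegrableOn h (Ico a b) μ.totalVariation)
    (hpos : ∀ t ∈ jumpSet g a b, 0 < 1 + h t * jump g t) :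
    ∀ t ∈ Icc a b,
      (∏' s : ↥(Ico a t ∩ jumpSet g a b), (1 + h s.1 * jump g s.1)) *
          Real.exp (sInt μ h (Ico a t \ jumpSet g a b)) =
        Real.exp (sInt μ (hbar g h) (Ico a t)) ∧
      0 < (∏' s : ↥(Ico a t ∩ jumpSet g a b), (1 + h s.1 * jump g s.1)) *
          Real.exp (sInt μ h (Ico a t \ jumpSet g a b)) := by
  intro t ht
  set D := jumpSet g a b
  set S := Ico a t ∩ D
  have hD : D.Countable := countable_jumpSet hμ
  have hsub : Ico a t ⊆ Ico a b := Ico_subset_Ico_right ht.2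
  have hS : S.Countable := hD.mono inter_subset_right
  have hjumpS : ∀ s ∈ S, jump g s = μ {s} := fun s hs ↦ jump_eq_apply_singleton hμ hs.2.1
  have hhS : IntegrableOn h S μ.totalVariation := hh.mono_set (inter_subset_left.trans hsub)
  have hC : MeasurableSet (Ico a t \ D) := measurableSet_Ico.diff hD.measurableSet
  have hbarC : EqOn (hbar g h) h (Ico a t \ D) :=
    (hbar_eqOn_sdiff_jumpSet g h a b).mono (sdiff_subset_sdiff_left hsub)
  have hbarS : IntegrableOn (hbar g h) S μ.totalVariation := integrableOn_hbar hS hjumpS hhS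
  have hsplit : sInt μ (hbar g h) (Ico a t) =
      ∑' s : S, Real.log (1 + h s * jump g s) + sInt μ h (Ico a t \ D) := calc
    _ = sInt μ (hbar g h) S + sInt μ (hbar g h) (Ico a t \ D) := by
      rw [← sInt_union disjoint_sdiff_inter.symm hC hbarS
        ((hh.mono_set (sdiff_subset.trans hsub)).congr_fun hbarC.symm hC), inter_union_sdiff]
    _ = _ := by
      rw [sInt_of_countable hS hbarS, sInt_congr hC hbarC]
      congr 1
      exact tsum_congr fun s ↦ by rw [← hjumpS s s.2, jump_mul_hbar]
  have hlog : Summable fun s : S ↦ Real.log (1 + h s * jump g s) :=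
    Real.summable_log_one_add_of_summable (summable_mul_jump hS hjumpS hhS)
  rw [← Real.rexp_tsum_eq_tprod (fun s : S ↦ hpos s s.2.2) hlog, ← Real.exp_add, hsplit]
  exact ⟨rfl, Real.exp_pos _⟩

/-- When `1 + h Δ⁺g > 0` on `D_g`, the `g`-exponential equals
`exp(∫_{[a,t)} h̄ dμ_g)` and is everywhere positive. -/
theorem gExp_eq_exp_hbar (a b : ℝ) (hab : a < b) (g : ℝ → ℝ)
    (hbv : BoundedVariationOn g (Icc a b))
    (hlc : ∀ t ∈ Ioc a b, Tendsto g (nhdsWithin t (Iio t)) (nhds (g t)))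
    (μ : MeasureTheory.SignedMeasure ℝ)
    (hμ : ∀ t ∈ Icc a b, μ (Ico a t) = g t - g a)
    (h : ℝ → ℝ)
    (hh : IntegrableOn h (Ico a b) μ.totalVariation)
    (hpos : ∀ t ∈ jumpSet g a b, 0 < 1 + h t * jump g t) :
    ∀ t ∈ Icc a b,
      (∏' s : ↥(Ico a t ∩ jumpSet g a b), (1 + h s.1 * jump g s.1)) *
          Real.exp (sInt μ h (Ico a t \ jumpSet g a b)) =
        Real.exp (sInt μ (hbar g h) (Ico a t)) ∧
      0 < (∏' s : ↥(Ico a t ∩ jumpSet g a b), (1 + h s.1 * jump g s.1)) *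
          Real.exp (sInt μ h (Ico a t \ jumpSet g a b)) :=
  gExp_eq_exp_hbar_general a b g μ hμ h hh hpos
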